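/- arXiv:math/0403395 — 5 statements merged into one kernel-verified Lean document; each statement's English description precedes it below -/
import Mathlib

section
/- Let p, q, l, l', r be integers with p and q relatively prime and 0 < q < p, satisfying 1 − l·p = r·(p+q). If the rational number (2p+q+1)/(p(p+q)) + 2 − (l+1)/(p+q) − (l'+1)/p is an integer, then p divides r − l' and q·l' ≡ 1 (mod p). -/
/-! Multiplying the index by `p (p + q)` shows that
`2p + q + 1 + 2p(p + q) - p(l + 1) - (p + q)(l' + 1)` is a multiple of `p (p + q)`;
reduced modulo `p` this says `q l' ≡ 1`. The relation between `l` and `r` says `q r ≡ 1`,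
so `l' ≡ r` because `q` is invertible modulo `p`. -/

theorem Int.ModEq.cancel_left_of_isCoprime {n a b c : ℤ} (hc : IsCoprime n c)
    (h : c * a ≡ c * b [ZMOD n]) : a ≡ b [ZMOD n] :=
  Int.modEq_iff_dvd.mpr <| hc.dvd_of_dvd_mul_left <| by
    simpa only [mul_sub] using Int.modEq_iff_dvd.mp h

theorem index_mul_eq_of_eq_intCast {p q l l' k : ℤ} (hp : (p : ℚ) ≠ 0) (hpq : (p : ℚ) + q ≠ 0)
    (h : (2 * p + q + 1 : ℚ) / (p * (p + q)) + 2 - (l + 1) / (p + q) - (l' + 1) / p = k) :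
    2 * p + q + 1 + 2 * p * (p + q) - p * (l + 1) - (p + q) * (l' + 1) = p * (p + q) * k := by
  field_simp at h
  exact_mod_cast h

theorem mul_modEq_one_of_index_eq_intCast {p q l l' k : ℤ} (hp : (p : ℚ) ≠ 0)
    (hpq : (p : ℚ) + q ≠ 0)
    (h : (2 * p + q + 1 : ℚ) / (p * (p + q)) + 2 - (l + 1) / (p + q) - (l' + 1) / p = k) :
    q * l' ≡ 1 [ZMOD p] :=
  Int.modEq_iff_dvd.mpr ⟨k * (p + q) - 2 * (p + q) + l + l', by
    linear_combination index_mul_eq_of_eq_intCast hp hpq h⟩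

theorem mul_modEq_one_of_one_sub_mul_eq {p q l r : ℤ} (h : 1 - l * p = r * (p + q)) :
    q * r ≡ 1 [ZMOD p] :=
  Int.modEq_iff_dvd.mpr ⟨l + r, by linear_combination h⟩

/-- If `p, q` are coprime integers with `0 < q < p`, and integers `l, l', r`
satisfy `1 - l*p = r*(p+q)`, and the rational number
`(2p+q+1)/(p(p+q)) + 2 - (l+1)/(p+q) - (l'+1)/p` is an integer, then
`p ∣ r - l'` and `q*l' ≡ 1 (mod p)`. -/
theorem stmt_1 (p q l l' r : ℤ)
    (hcop : IsCoprime p q) (hq0 : 0 < q) (hqp : q < p)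
    (hlr : 1 - l * p = r * (p + q))
    (hint : ∃ k : ℤ,
      ((2 * p + q + 1 : ℚ)) / ((p : ℚ) * ((p : ℚ) + (q : ℚ))) + 2
        - ((l : ℚ) + 1) / ((p : ℚ) + (q : ℚ)) - ((l' : ℚ) + 1) / (p : ℚ) = (k : ℚ)) :
    p ∣ (r - l') ∧ q * l' ≡ 1 [ZMOD p] := by
  obtain ⟨k, hk⟩ := hint
  have hp : (0 : ℚ) < p := by exact_mod_cast hq0.trans hqp
  have hq : (0 : ℚ) < q := by exact_mod_cast hq0
  have hl' : q * l' ≡ 1 [ZMOD p] := mul_modEq_one_of_index_eq_intCast hp.ne' (by positivity) hk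
  have hr : q * r ≡ 1 [ZMOD p] := mul_modEq_one_of_one_sub_mul_eq hlr
  exact ⟨(hl'.trans hr.symm).cancel_left_of_isCoprime hcop |>.dvd, hl'⟩
end

section
/- Let p, q, q', l, r be integers with p and q relatively prime, 0 < q < p and 0 < q' < p, satisfying 1 − l·p = r·(p+q). If the rational number (2p+q+1)/(p(p+q)) + 2 − (l+1)/(p+q) − (1+q')/p is an integer, then q·q' ≡ 1 (mod p). -/
/-! Clearing the denominator `p (p + q)` turns integrality of the index into an identity of
integers; reducing it modulo `p` leaves exactly `1 - q q' ≡ 0`. -/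

theorem index_mul_denom_eq {K : Type*} [Field K] {p q l q' : K} (hp : p ≠ 0) (hpq : p + q ≠ 0) :
    ((2 * p + q + 1) / (p * (p + q)) + 2 - (l + 1) / (p + q) - (1 + q') / p) * (p * (p + q))
      = 2 * p + q + 1 + 2 * p * (p + q) - p * (l + 1) - (p + q) * (1 + q') := by
  field_simp

theorem Int.modEq_one_of_index_eq {p q q' l k : ℤ}
    (h : 2 * p + q + 1 + 2 * p * (p + q) - p * (l + 1) - (p + q) * (1 + q') = k * (p * (p + q))) :
    q * q' ≡ 1 [ZMOD p] :=
  Int.modEq_iff_dvd.mpr ⟨k * (p + q) - 2 * (p + q) + l + q', by linear_combination h⟩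

theorem stmt_3_general (p q q' l : ℤ)
    (hq0 : 0 < q) (hqp : q < p)
    (hint : ∃ k : ℤ,
      ((2 * p + q + 1 : ℚ)) / ((p : ℚ) * ((p : ℚ) + (q : ℚ))) + 2
        - ((l : ℚ) + 1) / ((p : ℚ) + (q : ℚ)) - (1 + (q' : ℚ)) / (p : ℚ) = (k : ℚ)) :
    q * q' ≡ 1 [ZMOD p] := by
  obtain ⟨k, hk⟩ := hint
  have hp : (p : ℚ) ≠ 0 := by exact_mod_cast (hq0.trans hqp).ne'
  have hpq : (p : ℚ) + q ≠ 0 := by exact_mod_cast (by omega : p + q ≠ 0)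
  have hcleared := congrArg (· * ((p : ℚ) * (p + q))) hk
  simp only [index_mul_denom_eq hp hpq] at hcleared
  exact Int.modEq_one_of_index_eq (by exact_mod_cast hcleared)

/-- If `p, q` are coprime integers with `0 < q < p`, `0 < q' < p`,
integers `l, r` satisfy `1 - l*p = r*(p+q)`, and the rational number
`(2p+q+1)/(p(p+q)) + 2 - (l+1)/(p+q) - (1+q')/p` is an integer, then
`q*q' ≡ 1 (mod p)`. -/
theorem stmt_3 (p q q' l r : ℤ)
    (hcop : IsCoprime p q) (hq0 : 0 < q) (hqp : q < p)
    (hq'0 : 0 < q') (hq'p : q' < p)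
    (hlr : 1 - l * p = r * (p + q))
    (hint : ∃ k : ℤ,
      ((2 * p + q + 1 : ℚ)) / ((p : ℚ) * ((p : ℚ) + (q : ℚ))) + 2
        - ((l : ℚ) + 1) / ((p : ℚ) + (q : ℚ)) - (1 + (q' : ℚ)) / (p : ℚ) = (k : ℚ)) :
    q * q' ≡ 1 [ZMOD p] :=
  stmt_3_general p q q' l hq0 hqp hint
end

section
/- Let m ≥ 1 be an integer, let a ∈ ℂ with a ≠ 0, let r > 0 be a real number, and let F : ℂ → ℂ be continuous on the closed disc {w ∈ ℂ : |w| ≤ r} with |F(w)| ≤ |a|·r^m for all w in this disc. Then there exists w₀ ∈ ℂ with |w₀| ≤ r such that F(w₀) + a·w₀^m = 0. -/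
/-!
If `h w = F w + a * w ^ m` had no zero on the closed disc, it would have a continuous logarithm
there, since the disc is simply connected; so `h` would wind zero times around `0` along the
boundary circle `γ`. But on that circle `|F| ≤ |a γ ^ m|`, so `h ∘ γ = a γ ^ m · q` with `q` never a
nonpositive real: `h ∘ γ` winds as often as `a γ ^ m`, namely `m ≥ 1` times.
-/

open Complex Metric

theorem exists_continuous_exp_eq {X : Type*} [TopologicalSpace X] [SimplyConnectedSpace X]
    [LocallyPathConnectedSpace X] {g : X → ℂ} (hg : Continuous g) (hg₀ : ∀ x, g x ≠ 0) :
    ∃ L : X → ℂ, Continuous L ∧ ∀ x, exp (L x) = g x := by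
  obtain ⟨x₀⟩ : Nonempty X := inferInstance
  obtain ⟨L, ⟨-, hL⟩, -⟩ := isCoveringMapOn_exp.existsUnique_continuousMap_lifts ⟨g, hg⟩
    (exp_log (hg₀ x₀)) hg₀
  exact ⟨L, L.continuous, congrFun hL⟩

theorem exists_continuousOn_exp_eq_of_closedBall {E : Type*} [NormedAddCommGroup E]
    [NormedSpace ℝ E] {r : ℝ} (hr : 0 < r) {g : E → ℂ} (hg : ContinuousOn g (closedBall 0 r))
    (hg₀ : ∀ x ∈ closedBall 0 r, g x ≠ 0) :
    ∃ L : E → ℂ, ContinuousOn L (closedBall 0 r) ∧ ∀ x ∈ closedBall 0 r, exp (L x) = g x := by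
  -- a radial retraction onto the ball reduces this to the simply connected space `E`
  set ρ : E → E := fun x ↦ (r / max r ‖x‖) • x
  have hρ_mem (x : E) : ρ x ∈ closedBall 0 r := by
    have : 0 < max r ‖x‖ := lt_max_of_lt_left hr
    rw [mem_closedBall_zero_iff, norm_smul, Real.norm_of_nonneg (by positivity), div_mul_eq_mul_div,
      div_le_iff₀ this]
    exact mul_le_mul_of_nonneg_left (le_max_right _ _) hr.le
  have hρ_eq {x : E} (hx : x ∈ closedBall 0 r) : ρ x = x := by
    rw [mem_closedBall_zero_iff] at hx
    simp [ρ, max_eq_left hx, hr.ne']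
  have hρ : Continuous ρ := by
    refine Continuous.smul (continuous_const.div (by fun_prop) fun x ↦ ?_) continuous_id
    exact (lt_max_of_lt_left hr).ne'
  obtain ⟨L, hL, hexp⟩ := exists_continuous_exp_eq (hg.comp_continuous hρ hρ_mem)
    fun x ↦ hg₀ _ (hρ_mem x)
  refine ⟨L, hL.continuousOn, fun x hx ↦ ?_⟩
  rw [hexp, Function.comp_apply, hρ_eq hx]

theorem sub_eq_sub_of_exp_eq_exp {X : Type*} [TopologicalSpace X] [PreconnectedSpace X]
    {f g : X → ℂ} (hf : Continuous f) (hg : Continuous g) (hfg : ∀ x, exp (f x) = exp (g x))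
    (x y : X) : f x - g x = f y - g y := by
  have hdisc : IsDiscrete (AddSubgroup.zmultiples (2 * Real.pi * I) : Set ℂ) :=
    isDiscrete_iff_discreteTopology.mpr (NormedSpace.discreteTopology_zmultiples _)
  refine isPreconnected_univ.constant_of_mapsTo hdisc (hf.sub hg).continuousOn (fun z _ ↦ ?_)
    (Set.mem_univ x) (Set.mem_univ y)
  obtain ⟨n, hn⟩ := exp_eq_one_iff.mp
    (show exp (f z - g z) = 1 by rw [exp_sub, hfg, div_self (exp_ne_zero _)])
  exact ⟨n, by simp only [zsmul_eq_mul, Pi.sub_apply, hn]⟩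

theorem mem_slitPlane_of_norm_sub_one_le {z : ℂ} (hz : ‖z - 1‖ ≤ 1) (hz₀ : z ≠ 0) :
    z ∈ slitPlane := by
  rw [mem_slitPlane_iff]
  by_contra! hz_neg
  have hz_real : z = z.re := ext rfl (by simp [hz_neg.2])
  rw [hz_real, ← ofReal_one, ← ofReal_sub, norm_real, Real.norm_eq_abs,
    abs_of_nonpos (by linarith)] at hz
  exact hz₀ (by rw [hz_real, le_antisymm hz_neg.1 (by linarith), ofReal_zero])

theorem div_mem_slitPlane_of_norm_sub_le {u v : ℂ} (huv : ‖u - v‖ ≤ ‖v‖) (hu : u ≠ 0) :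
    u / v ∈ slitPlane := by
  have hv : v ≠ 0 := by rintro rfl; simp_all
  refine mem_slitPlane_of_norm_sub_one_le ?_ (div_ne_zero hu hv)
  rwa [div_sub_one hv, norm_div, div_le_one (norm_pos_iff.mpr hv)]

/-- If `m ≥ 1`, `a ≠ 0`, `r > 0`, and `F : ℂ → ℂ` is continuous on the
closed disc of radius `r` with `|F(w)| ≤ |a|·r^m` there, then there exists `w₀` with
`|w₀| ≤ r` and `F(w₀) + a·w₀^m = 0`. -/
theorem stmt_6 (m : ℕ) (hm : 1 ≤ m) (a : ℂ) (ha : a ≠ 0) (r : ℝ) (hr : 0 < r)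
    (F : ℂ → ℂ) (hF : ContinuousOn F (Metric.closedBall (0 : ℂ) r))
    (hbound : ∀ w ∈ Metric.closedBall (0 : ℂ) r, ‖F w‖ ≤ ‖a‖ * r ^ m) :
    ∃ w₀ : ℂ, ‖w₀‖ ≤ r ∧ F w₀ + a * w₀ ^ m = 0 := by
  by_contra! hne
  set h : ℂ → ℂ := fun w ↦ F w + a * w ^ m
  have hh : ContinuousOn h (closedBall 0 r) := hF.add (by fun_prop)
  have hh₀ (w) (hw : w ∈ closedBall (0 : ℂ) r) : h w ≠ 0 := hne w (mem_closedBall_zero_iff.mp hw)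
  obtain ⟨L, hL, hexpL⟩ := exists_continuousOn_exp_eq_of_closedBall hr hh hh₀
  set θ : ℝ → ℂ := fun s ↦ Real.log r + 2 * Real.pi * I * s
  have hγ_mem (s : ℝ) : exp (θ s) ∈ closedBall (0 : ℂ) r := by
    simp [θ, norm_exp, Real.exp_log hr]
  have hq (s : ℝ) : h (exp (θ s)) / (a * exp (θ s) ^ m) ∈ slitPlane := by
    refine div_mem_slitPlane_of_norm_sub_le ?_ (hh₀ _ (hγ_mem s))
    simpa [h, norm_exp, θ, Real.exp_log hr] using hbound _ (hγ_mem s)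
  have hq_cont : Continuous fun s ↦ h (exp (θ s)) / (a * exp (θ s) ^ m) :=
    (hh.comp_continuous (by fun_prop) hγ_mem).div (by fun_prop)
      fun s ↦ mul_ne_zero ha (pow_ne_zero _ (exp_ne_zero _))
  -- two continuous logarithms of `h ∘ exp ∘ θ`: the first is `1`-periodic, the second gains `2πim`
  have key := sub_eq_sub_of_exp_eq_exp (f := fun s ↦ L (exp (θ s)))
    (g := fun s ↦ log a + m * θ s + log (h (exp (θ s)) / (a * exp (θ s) ^ m)))
    (hL.comp_continuous (by fun_prop) hγ_mem) (.add (by fun_prop) (hq_cont.clog hq))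
    (fun s ↦ by
      rw [hexpL _ (hγ_mem s), exp_add (log a + _), exp_add (log a), exp_log ha, exp_nat_mul,
        exp_log (slitPlane_ne_zero (hq s)), mul_div_cancel₀ _ (by simp [ha])])
    0 1
  have hθ : θ 1 = θ 0 + 2 * Real.pi * I := by simp [θ]
  have hγ : exp (θ 1) = exp (θ 0) := by rw [hθ, exp_add (θ 0), exp_two_pi_mul_I, mul_one]
  rw [hγ, hθ] at key
  have : (m : ℂ) * (2 * Real.pi * I) = 0 := by linear_combination key
  simp [Real.pi_ne_zero, I_ne_zero] at this
  omega
end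

section
/- Identify ℂ with ℝ² via w = s + it, and for a function f : ℂ → ℂ let ∂_s f and ∂_t f denote its partial derivatives in the directions 1 and i, let ∂̄f = (1/2)(∂_s f + i·∂_t f), ∂f = (1/2)(∂_s f − i·∂_t f), and Δf = ∂_s²f + ∂_t²f. Let R > 0 and let K be the closed disc of radius R centered at 0 in ℂ. Suppose u : ℂ → ℂ is twice continuously differentiable on an open neighborhood of K, A, B : ℂ → ℂ are continuously differentiable on that neighborhood, and on that neighborhood ∂̄u + A·u + B·ū = 0, where ū denotes the pointwise complex conjugate of u. Then there exists a constant c > 0 such that for all z ∈ K, |Δu(z)| ≤ c·(|u(z)| + |∂_s u(z)| + |∂_t u(z)|). -/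
/-!
Since `u` is `C²`, mixed partials commute and `Δu = 2 (∂_s - i ∂_t) ∂̄u`. Near each point of the
neighbourhood, `∂̄u = -(A u + B ū)`, so the product rule bounds the first derivatives of `∂̄u`, and
hence `Δu`, by `(|A| + |B| + ‖DA‖ + ‖DB‖)` times `|u| + |∂_s u| + |∂_t u|`. The coefficient is
continuous, so it is bounded on the compact disc.
-/

/-- Partial derivative of `f : ℂ → ℂ` in the real direction `1` (the `s`-direction,
identifying `ℂ` with `ℝ²` via `w = s + it`). -/
noncomputable def ds (f : ℂ → ℂ) (z : ℂ) : ℂ := fderiv ℝ f z 1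

/-- Partial derivative of `f : ℂ → ℂ` in the direction `i` (the `t`-direction). -/
noncomputable def dt (f : ℂ → ℂ) (z : ℂ) : ℂ := fderiv ℝ f z Complex.I

/-- The Cauchy–Riemann operator `∂̄ = (1/2)(∂_s + i ∂_t)`. -/
noncomputable def dbar (f : ℂ → ℂ) (z : ℂ) : ℂ := (1 / 2) * (ds f z + Complex.I * dt f z)

/-- The Laplacian `Δ = ∂_s² + ∂_t²`. -/
noncomputable def lap (f : ℂ → ℂ) (z : ℂ) : ℂ := ds (ds f) z + dt (dt f) z

open Complex Filter Topology
open scoped ComplexConjugate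

theorem fderiv_fderiv_apply {𝕜 E F : Type*} [NontriviallyNormedField 𝕜]
    [NormedAddCommGroup E] [NormedSpace 𝕜 E] [NormedAddCommGroup F] [NormedSpace 𝕜 F]
    {f : E → F} {x : E} (h : DifferentiableAt 𝕜 (fderiv 𝕜 f) x) (v e : E) :
    fderiv 𝕜 (fun y => fderiv 𝕜 f y v) x e = fderiv 𝕜 (fderiv 𝕜 f) x e v := by
  rw [fderiv_clm_apply h (differentiableAt_const v)]
  simp

theorem IsCompact.exists_pos_mul_bound {X : Type*} [TopologicalSpace X] {K : Set X}
    (hK : IsCompact K) {κ f g : X → ℝ} (hκ : ContinuousOn κ K) (hg : ∀ x ∈ K, 0 ≤ g x)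
    (hf : ∀ x ∈ K, f x ≤ κ x * g x) : ∃ c : ℝ, 0 < c ∧ ∀ x ∈ K, f x ≤ c * g x := by
  obtain ⟨C, hC⟩ := hK.exists_bound_of_continuousOn hκ
  refine ⟨max C 1, by positivity, fun x hx => (hf x hx).trans ?_⟩
  gcongr
  · exact hg x hx
  · exact (le_abs_self _).trans ((hC x hx).trans (le_max_left _ _))

section CauchyRiemann

variable {u A B : ℂ → ℂ} {z : ℂ}

theorem ContDiffAt.differentiableAt_fderiv_apply (hu : ContDiffAt ℝ 2 u z) (v : ℂ) :
    DifferentiableAt ℝ (fun w => fderiv ℝ u w v) z :=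
  ((hu.fderiv_right (m := 1) (by norm_num)).differentiableAt one_ne_zero).clm_apply
    (differentiableAt_const v)

theorem ds_dt_comm (hu : ContDiffAt ℝ 2 u z) : ds (dt u) z = dt (ds u) z := by
  have hF := (hu.fderiv_right (m := 1) (by norm_num)).differentiableAt one_ne_zero
  change fderiv ℝ (fun w => fderiv ℝ u w I) z 1 = fderiv ℝ (fun w => fderiv ℝ u w 1) z I
  rw [fderiv_fderiv_apply hF, fderiv_fderiv_apply hF]
  exact hu.isSymmSndFDerivAt (by simp) 1 I

theorem fderiv_dbar_apply (hs : DifferentiableAt ℝ (ds u) z)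
    (ht : DifferentiableAt ℝ (dt u) z) (e : ℂ) :
    fderiv ℝ (dbar u) z e = 1 / 2 * (fderiv ℝ (ds u) z e + I * fderiv ℝ (dt u) z e) := by
  have h : HasFDerivAt (dbar u)
      ((1 / 2 : ℂ) • (fderiv ℝ (ds u) z + I • fderiv ℝ (dt u) z)) z :=
    (hs.hasFDerivAt.add (ht.hasFDerivAt.const_mul I)).const_mul (1 / 2 : ℂ)
  rw [h.fderiv]
  simp [smul_eq_mul, mul_add]

theorem lap_eq_two_mul_dbar (hu : ContDiffAt ℝ 2 u z) :
    lap u z = 2 * (ds (dbar u) z - I * dt (dbar u) z) := by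
  have hs := hu.differentiableAt_fderiv_apply 1
  have ht := hu.differentiableAt_fderiv_apply I
  have h1 : ds (dbar u) z = 1 / 2 * (ds (ds u) z + I * ds (dt u) z) :=
    fderiv_dbar_apply hs ht 1
  have hI : dt (dbar u) z = 1 / 2 * (dt (ds u) z + I * dt (dt u) z) :=
    fderiv_dbar_apply hs ht I
  rw [lap, h1, hI, ds_dt_comm hu]
  linear_combination dt (dt u) z * I_sq

theorem norm_fderiv_mul_add_mul_conj_apply_le (hA : DifferentiableAt ℝ A z)
    (hB : DifferentiableAt ℝ B z) (hu : DifferentiableAt ℝ u z) (e : ℂ) :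
    ‖fderiv ℝ (fun w => A w * u w + B w * conj (u w)) z e‖ ≤
      (‖A z‖ + ‖B z‖) * ‖fderiv ℝ u z e‖
        + (‖fderiv ℝ A z‖ + ‖fderiv ℝ B z‖) * ‖e‖ * ‖u z‖ := by
  have hconj : HasFDerivAt (fun w => conj (u w)) ((conjCLE : ℂ →L[ℝ] ℂ).comp (fderiv ℝ u z)) z :=
    conjCLE.hasFDerivAt.comp z hu.hasFDerivAt
  have hderiv : fderiv ℝ (fun w => A w * u w + B w * conj (u w)) z e =
      A z * fderiv ℝ u z e + u z * fderiv ℝ A z e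
        + B z * conj (fderiv ℝ u z e) + conj (u z) * fderiv ℝ B z e := by
    have h : HasFDerivAt (fun w => A w * u w + B w * conj (u w)) _ z :=
      (hA.hasFDerivAt.mul hu.hasFDerivAt).add (hB.hasFDerivAt.mul hconj)
    rw [h.fderiv]
    simp [smul_eq_mul]
    ring
  have hA' := (fderiv ℝ A z).le_opNorm e
  have hB' := (fderiv ℝ B z).le_opNorm e
  rw [hderiv]
  refine norm_add₄_le.trans ?_
  simp only [norm_mul, RCLike.norm_conj]
  nlinarith [norm_nonneg (u z), norm_nonneg (fderiv ℝ u z e)]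

theorem norm_lap_le_of_dbar_eventuallyEq (hu : ContDiffAt ℝ 2 u z)
    (hA : DifferentiableAt ℝ A z) (hB : DifferentiableAt ℝ B z)
    (heq : dbar u =ᶠ[𝓝 z] fun w => -(A w * u w + B w * conj (u w))) :
    ‖lap u z‖ ≤ 4 * (‖A z‖ + ‖B z‖ + ‖fderiv ℝ A z‖ + ‖fderiv ℝ B z‖)
      * (‖u z‖ + ‖ds u z‖ + ‖dt u z‖) := by
  have hud := hu.differentiableAt two_ne_zero
  have hdbar : ∀ e, ‖fderiv ℝ (dbar u) z e‖ =
      ‖fderiv ℝ (fun w => A w * u w + B w * conj (u w)) z e‖ := fun e => by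
    rw [heq.fderiv_eq, fderiv_fun_neg]
    simp
  have hs : ‖ds (dbar u) z‖ ≤
      (‖A z‖ + ‖B z‖) * ‖ds u z‖ + (‖fderiv ℝ A z‖ + ‖fderiv ℝ B z‖) * ‖u z‖ := by
    have h := norm_fderiv_mul_add_mul_conj_apply_le hA hB hud 1
    rw [norm_one, mul_one] at h
    exact (hdbar 1).trans_le h
  have ht : ‖dt (dbar u) z‖ ≤
      (‖A z‖ + ‖B z‖) * ‖dt u z‖ + (‖fderiv ℝ A z‖ + ‖fderiv ℝ B z‖) * ‖u z‖ := by
    have h := norm_fderiv_mul_add_mul_conj_apply_le hA hB hud I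
    rw [norm_I, mul_one] at h
    exact (hdbar I).trans_le h
  have hlap : ‖lap u z‖ ≤ 2 * (‖ds (dbar u) z‖ + ‖dt (dbar u) z‖) := by
    rw [lap_eq_two_mul_dbar hu, norm_mul, RCLike.norm_ofNat]
    gcongr
    simpa using norm_sub_le (ds (dbar u) z) (I * dt (dbar u) z)
  have hAB : 0 ≤ ‖A z‖ + ‖B z‖ := by positivity
  have hAB' : 0 ≤ ‖fderiv ℝ A z‖ + ‖fderiv ℝ B z‖ := by positivity
  nlinarith [mul_nonneg hAB (norm_nonneg (u z)), mul_nonneg hAB' (norm_nonneg (ds u z)),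
    mul_nonneg hAB' (norm_nonneg (dt u z)), mul_nonneg hAB (norm_nonneg (ds u z)),
    mul_nonneg hAB (norm_nonneg (dt u z))]

end CauchyRiemann

theorem stmt_7_general (R : ℝ) (u A B : ℂ → ℂ) (U : Set ℂ)
    (hU : IsOpen U) (hKU : Metric.closedBall (0 : ℂ) R ⊆ U)
    (hu : ContDiffOn ℝ 2 u U) (hA : ContDiffOn ℝ 1 A U) (hB : ContDiffOn ℝ 1 B U)
    (heq : ∀ z ∈ U, dbar u z + A z * u z + B z * (starRingEnd ℂ) (u z) = 0) :
    ∃ c : ℝ, 0 < c ∧ ∀ z ∈ Metric.closedBall (0 : ℂ) R,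
      ‖lap u z‖ ≤
        c * (‖u z‖ + ‖ds u z‖ + ‖dt u z‖) := by
  have hpointwise : ∀ z ∈ U, ‖lap u z‖ ≤
      4 * (‖A z‖ + ‖B z‖ + ‖fderiv ℝ A z‖ + ‖fderiv ℝ B z‖) * (‖u z‖ + ‖ds u z‖ + ‖dt u z‖) := by
    intro z hz
    have hzU := hU.mem_nhds hz
    refine norm_lap_le_of_dbar_eventuallyEq (hu.contDiffAt hzU)
      ((hA.contDiffAt hzU).differentiableAt one_ne_zero)
      ((hB.contDiffAt hzU).differentiableAt one_ne_zero) ?_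
    filter_upwards [hzU] with w hw
    linear_combination heq w hw
  have hκ : ContinuousOn
      (fun z => 4 * (‖A z‖ + ‖B z‖ + ‖fderiv ℝ A z‖ + ‖fderiv ℝ B z‖)) U := by
    have := hA.continuousOn; have := hB.continuousOn
    have := hA.continuousOn_fderiv_of_isOpen hU le_rfl
    have := hB.continuousOn_fderiv_of_isOpen hU le_rfl
    fun_prop
  exact (isCompact_closedBall 0 R).exists_pos_mul_bound (hκ.mono hKU)
    (fun _ _ => by positivity) (fun z hz => hpointwise z (hKU hz))

/-- If `u` is `C²` and `A, B` are `C¹` on an open neighborhood of the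
closed disc `K` of radius `R`, and `∂̄u + A·u + B·ū = 0` on that neighborhood, then there
is `c > 0` with `|Δu| ≤ c(|u| + |∂_s u| + |∂_t u|)` on `K`. -/
theorem stmt_7 (R : ℝ) (hR : 0 < R) (u A B : ℂ → ℂ) (U : Set ℂ)
    (hU : IsOpen U) (hKU : Metric.closedBall (0 : ℂ) R ⊆ U)
    (hu : ContDiffOn ℝ 2 u U) (hA : ContDiffOn ℝ 1 A U) (hB : ContDiffOn ℝ 1 B U)
    (heq : ∀ z ∈ U, dbar u z + A z * u z + B z * (starRingEnd ℂ) (u z) = 0) :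
    ∃ c : ℝ, 0 < c ∧ ∀ z ∈ Metric.closedBall (0 : ℂ) R,
      ‖lap u z‖ ≤
        c * (‖u z‖ + ‖ds u z‖ + ‖dt u z‖) :=
  stmt_7_general R u A B U hU hKU hu hA hB heq
end

section
/- Let R > 0, let m, n ≥ 1 be integers, and let f, g : ℂ → ℂ be complex differentiable on the open disc {z : |z| < R} with f(0) ≠ 0 and g(0) ≠ 0. Define U(z) = z^m·f(z) and V(z) = z^n·g(z). Then there exists ρ with 0 < ρ < R such that for every θ ∈ ℝ, the function r ↦ |U(r·e^{iθ})|² + |V(r·e^{iθ})|² is strictly increasing on the interval (0, ρ]. -/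
/-!
Along the ray `r ↦ r • e` (with `‖e‖ = 1`), `‖z ^ k * f z‖ = r ^ k * ‖f (r • e)‖`. Near `0` the
factor `‖f (r • e)‖` stays above some `a > 0` and, `f` being `C¹`, is `K`-Lipschitz in `r`. Since
`s ^ k - r ^ k ≥ r ^ (k - 1) (s - r)`, the gain from the power outweighs the possible loss
`r ^ k K (s - r)` as soon as `r K < a`, uniformly in the direction `e`.
-/

open Set Metric Filter Topology

theorem strictMonoOn_pow_mul_of_sub_le {k : ℕ} {ρ a C : ℝ} {φ : ℝ → ℝ} (hk : k ≠ 0)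
    (hC : 0 ≤ C) (hρ : ρ * C < a) (hφa : ∀ r ∈ Ioc 0 ρ, a ≤ φ r)
    (hφ : ∀ r ∈ Ioc 0 ρ, ∀ s ∈ Ioc 0 ρ, r ≤ s → φ r - φ s ≤ C * (s - r)) :
    StrictMonoOn (fun r => r ^ k * φ r) (Ioc 0 ρ) := by
  intro r hr s hs hrs
  obtain ⟨j, rfl⟩ := Nat.exists_eq_succ_of_ne_zero hk
  have hr0 : 0 < r := hr.1
  have hrC : r * C < a := (mul_le_mul_of_nonneg_right hr.2 hC).trans_lt hρ
  have hφs : 0 ≤ φ s := (mul_nonneg hr0.le hC).trans (hrC.le.trans (hφa s hs))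
  have hpow : r ^ j * (s - r) ≤ s ^ (j + 1) - r ^ (j + 1) := by
    have hsj : 0 ≤ s * (s ^ j - r ^ j) :=
      mul_nonneg hs.1.le (sub_nonneg.2 (pow_le_pow_left₀ hr0.le hrs.le j))
    linarith [show s ^ (j + 1) - r ^ (j + 1) - r ^ j * (s - r) = s * (s ^ j - r ^ j) by ring]
  calc r ^ (j + 1) * φ r
      ≤ r ^ (j + 1) * (φ s + C * (s - r)) := by
        gcongr; linarith [hφ r hr s hs hrs.le]
    _ = r ^ (j + 1) * φ s + r ^ j * (s - r) * (r * C) := by ring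
    _ < r ^ (j + 1) * φ s + r ^ j * (s - r) * φ s := by
        gcongr; exact hrC.trans_le (hφa s hs)
    _ ≤ r ^ (j + 1) * φ s + (s ^ (j + 1) - r ^ (j + 1)) * φ s := by gcongr
    _ = s ^ (j + 1) * φ s := by ring

theorem exists_strictMonoOn_pow_mul_norm_comp_smul {E F : Type*} [NormedAddCommGroup E]
    [NormedSpace ℝ E] [NormedAddCommGroup F] [NormedSpace ℝ F] {f : E → F} {k : ℕ}
    (hk : k ≠ 0) (hf : ContDiffAt ℝ 1 f 0) (hf0 : f 0 ≠ 0) :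
    ∃ ρ > 0, ∀ e : E, ‖e‖ = 1 →
      StrictMonoOn (fun r : ℝ => r ^ k * ‖f (r • e)‖) (Ioc 0 ρ) := by
  obtain ⟨K, t, ht, hK⟩ := hf.exists_lipschitzOnWith
  set a := ‖f 0‖ / 2
  have ha : 0 < a := by positivity
  have hnear : ∀ᶠ z in 𝓝 (0 : E), z ∈ t ∧ a < ‖f z‖ :=
    (show ∀ᶠ z in 𝓝 (0 : E), z ∈ t from ht).and
      (continuousAt_const.eventually_lt hf.continuousAt.norm (by simp [a, hf0]))
  obtain ⟨δ, hδ, hball⟩ := eventually_nhds_iff_ball.mp hnear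
  set ρ := min (δ / 2) (a / (K + 1))
  have hρ : 0 < ρ := by positivity
  have hρK : ρ * K < a := by
    have : ρ * (K + 1) ≤ a := (le_div_iff₀ (by positivity)).mp (min_le_right _ _)
    nlinarith
  refine ⟨ρ, hρ, fun e he => ?_⟩
  have hnorm : ∀ r : ℝ, 0 ≤ r → ‖r • e‖ = r := fun r hr => by
    rw [norm_smul, he, mul_one, Real.norm_of_nonneg hr]
  have hmem : ∀ r ∈ Ioc 0 ρ, r • e ∈ ball (0 : E) δ := fun r hr => by
    rw [mem_ball_zero_iff, hnorm r hr.1.le]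
    linarith [hr.2, min_le_left (δ / 2) (a / (K + 1))]
  refine strictMonoOn_pow_mul_of_sub_le hk K.coe_nonneg hρK
    (fun r hr => (hball _ (hmem r hr)).2.le) fun r hr s hs hrs => ?_
  calc ‖f (r • e)‖ - ‖f (s • e)‖ ≤ dist (f (r • e)) (f (s • e)) := by
        rw [dist_eq_norm]; exact norm_sub_norm_le _ _
    _ ≤ K * dist (r • e) (s • e) :=
        hK.dist_le_mul _ (hball _ (hmem r hr)).1 _ (hball _ (hmem s hs)).1
    _ = K * (s - r) := by
        rw [dist_eq_norm, ← sub_smul, ← neg_sub, neg_smul, norm_neg, hnorm _ (sub_nonneg.2 hrs)]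

theorem StrictMonoOn.norm_pow_mul_sq {h : ℂ → ℂ} {k : ℕ} {ρ : ℝ} {e : ℂ} (he : ‖e‖ = 1)
    (hmono : StrictMonoOn (fun r : ℝ => r ^ k * ‖h (r • e)‖) (Ioc 0 ρ)) :
    StrictMonoOn (fun r : ℝ => ‖((r : ℂ) * e) ^ k * h (r * e)‖ ^ 2) (Ioc 0 ρ) := by
  have hnonneg : MapsTo (fun r : ℝ => r ^ k * ‖h (r • e)‖) (Ioc 0 ρ) {x | 0 ≤ x} :=
    fun r hr => mul_nonneg (pow_nonneg hr.1.le _) (norm_nonneg _)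
  refine ((pow_left_strictMonoOn₀ two_ne_zero).comp hmono hnonneg).congr fun r hr => ?_
  simp [Complex.real_smul, norm_pow, he, abs_of_pos hr.1]

/-- If `f, g` are holomorphic on the open disc of radius `R` with
`f(0) ≠ 0`, `g(0) ≠ 0`, and `U(z) = z^m f(z)`, `V(z) = z^n g(z)` with `m, n ≥ 1`,
then there is `ρ ∈ (0, R)` such that for every `θ ∈ ℝ` the function
`r ↦ |U(re^{iθ})|² + |V(re^{iθ})|²` is strictly increasing on `(0, ρ]`. -/
theorem stmt_9 (R : ℝ) (hR : 0 < R) (m n : ℕ) (hm : 1 ≤ m) (hn : 1 ≤ n)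
    (f g : ℂ → ℂ)
    (hf : DifferentiableOn ℂ f (Metric.ball (0 : ℂ) R))
    (hg : DifferentiableOn ℂ g (Metric.ball (0 : ℂ) R))
    (hf0 : f 0 ≠ 0) (hg0 : g 0 ≠ 0)
    (U V : ℂ → ℂ)
    (hU : ∀ z : ℂ, U z = z ^ m * f z) (hV : ∀ z : ℂ, V z = z ^ n * g z) :
    ∃ ρ : ℝ, 0 < ρ ∧ ρ < R ∧ ∀ θ : ℝ,
      StrictMonoOn
        (fun r : ℝ =>
          ‖U ((r : ℂ) * Complex.exp ((θ : ℂ) * Complex.I))‖ ^ 2 +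
          ‖V ((r : ℂ) * Complex.exp ((θ : ℂ) * Complex.I))‖ ^ 2)
        (Set.Ioc (0 : ℝ) ρ) := by
  have hC1 : ∀ {h : ℂ → ℂ}, DifferentiableOn ℂ h (ball 0 R) → ContDiffAt ℝ 1 h 0 :=
    fun hh => ((hh.analyticAt (ball_mem_nhds 0 hR)).contDiffAt).restrict_scalars ℝ
  obtain ⟨ρf, hρf, hUmono⟩ :=
    exists_strictMonoOn_pow_mul_norm_comp_smul (k := m) (by omega) (hC1 hf) hf0
  obtain ⟨ρg, hρg, hVmono⟩ :=
    exists_strictMonoOn_pow_mul_norm_comp_smul (k := n) (by omega) (hC1 hg) hg0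
  set ρ := min (min ρf ρg) (R / 2)
  refine ⟨ρ, by positivity, (min_le_right _ _).trans_lt (by linarith), fun θ => ?_⟩
  have he : ‖Complex.exp (θ * Complex.I)‖ = 1 := Complex.norm_exp_ofReal_mul_I θ
  simp only [hU, hV]
  exact ((hUmono _ he).norm_pow_mul_sq he |>.mono (Ioc_subset_Ioc_right (by simp [ρ]))).add
    ((hVmono _ he).norm_pow_mul_sq he |>.mono (Ioc_subset_Ioc_right (by simp [ρ])))
end
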